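/- For a < b, the hypergraph C_{a,b} whose vertices are the squares of an a×b chessboard and whose edges are the placements of a non-taking rooks (sets of a squares, no two in the same row or column) is strongly connected, and its exact transversals are exactly the rows of the chessboard. -/

import Mathlib

/-!
A rook placement on `α × β` is the graph of an injection `f : α → β`, and moving one rook to a
free column (one exists since `|α| < |β|`) is an exchange step. To get from `f` to `g`, pick a
row `i` where they differ; if column `g i` is occupied by the rook of some row `j`, first move
that rook to a free column, then move the rook of row `i` to `g i`. The first move does not
increase the Hamming distance to `g` and the second decreases it.

Two squares of an exact transversal `S` lying in different rows and columns are covered by a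
common placement, so they share a row or a column. For `p ∈ S` and `j ≠ p.2`, a placement
through `(p.1, j)` avoiding column `p.2` meets `S` in a square sharing neither row nor column
with `p` unless it is `(p.1, j)`. So `S` contains the row of `p`, and then nothing else.
-/

/-- An exact transversal of a hypergraph with edge set `E`: a set of vertices meeting
every edge in exactly one vertex. -/
def ExactTransversal {V : Type*} (E : Set (Finset V)) (S : Set V) : Prop :=
  ∀ e ∈ E, ∃! v, v ∈ e ∧ v ∈ S

/-- A hypergraph is strongly connected if any two edges are connected by a finite
sequence of edges in which consecutive edges have symmetric difference of size two. -/
def StronglyConnectedHG {V : Type*} [DecidableEq V] (E : Set (Finset V)) : Prop :=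
  ∀ e ∈ E, ∀ f ∈ E, ∃ (n : ℕ) (g : ℕ → Finset V), g 0 = e ∧ g n = f ∧
    (∀ i ≤ n, g i ∈ E) ∧ ∀ i < n, (symmDiff (g i) (g (i + 1))).card = 2

/-- The edges of the rook hypergraph: placements of `a` non-taking rooks on an
`a × b` board, i.e. graphs of injective functions `Fin a → Fin b`. -/
def rookEdges (a b : ℕ) : Set (Finset (Fin a × Fin b)) :=
  {s | ∃ f : Fin a → Fin b, Function.Injective f ∧
    s = Finset.univ.image fun i => (i, f i)}

open Finset Function

section StrongConnectivity

variable {V : Type*} [DecidableEq V]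

def exchangeRel (E : Set (Finset V)) (e f : Finset V) : Prop :=
  f ∈ E ∧ #(symmDiff e f) = 2

theorem exists_chain_of_reflTransGen {E : Set (Finset V)} {e f : Finset V} (he : e ∈ E)
    (h : Relation.ReflTransGen (exchangeRel E) e f) :
    ∃ (n : ℕ) (g : ℕ → Finset V), g 0 = e ∧ g n = f ∧
      (∀ i ≤ n, g i ∈ E) ∧ ∀ i < n, #(symmDiff (g i) (g (i + 1))) = 2 := by
  induction h with
  | refl => exact ⟨0, fun _ => e, rfl, rfl, fun _ _ => he, fun _ h => absurd h (Nat.not_lt_zero _)⟩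
  | @tail f f' _ hstep ih =>
    obtain ⟨n, g, hg0, hgn, hmem, hcard⟩ := ih
    refine ⟨n + 1, update g (n + 1) f', by simpa [update_of_ne] using hg0, by simp, ?_, ?_⟩
    · intro i hi
      rcases (Nat.le_succ_iff.mp hi) with hi | rfl
      · simpa [update_of_ne (by omega : i ≠ n + 1)] using hmem i hi
      · simpa using hstep.1
    · intro i hi
      rcases (Nat.lt_succ_iff_lt_or_eq.mp hi) with hi | rfl
      · simpa [update_of_ne (by omega : i ≠ n + 1), update_of_ne (by omega : i + 1 ≠ n + 1)]
          using hcard i hi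
      · simpa [hgn] using hstep.2

theorem StronglyConnectedHG.of_reflTransGen {E : Set (Finset V)}
    (h : ∀ e ∈ E, ∀ f ∈ E, Relation.ReflTransGen (exchangeRel E) e f) :
    StronglyConnectedHG E :=
  fun e he f hf => exists_chain_of_reflTransGen he (h e he f hf)

end StrongConnectivity

section Functions

variable {α β : Type*}

theorem Function.Injective.update_of_forall_ne [DecidableEq α] {f : α → β} (hf : Injective f)
    {c : β} (hc : ∀ k, f k ≠ c) (i : α) : Injective (update f i c) := by
  intro x y hxy
  simp only [update_apply] at hxy
  split_ifs at hxy with hx hy hy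
  · rw [hx, hy]
  · exact absurd hxy.symm (hc y)
  · exact absurd hxy (hc x)
  · exact hf hxy

section HammingDist

variable [Fintype α] [DecidableEq α] [DecidableEq β]

theorem hammingDist_update_le {f g : α → β} {j : α} (hj : f j ≠ g j) (c : β) :
    hammingDist (update f j c) g ≤ hammingDist f g := by
  refine card_le_card fun k hk => ?_
  rcases eq_or_ne k j with rfl | hkj
  · simpa using hj
  · simpa [update_of_ne hkj] using hk

theorem hammingDist_update_self_lt {f g : α → β} {i : α} (hi : f i ≠ g i) :
    hammingDist (update f i (g i)) g < hammingDist f g := by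
  refine card_lt_card ⟨fun k hk => ?_, fun h => absurd (h (by simpa using hi)) (by simp)⟩
  rcases eq_or_ne k i with rfl | hki
  · simp at hk
  · simpa [update_of_ne hki] using hk

end HammingDist

variable [Fintype α] [Fintype β]

theorem exists_forall_apply_ne (h : Fintype.card α < Fintype.card β) (f : α → β) :
    ∃ c, ∀ k, f k ≠ c := by
  by_contra! hf
  exact h.not_ge (Fintype.card_le_of_surjective f hf)

theorem exists_injective_apply_eq_forall_ne [DecidableEq β] (h : Fintype.card α < Fintype.card β)
    (i : α) {j c : β} (hjc : j ≠ c) : ∃ f : α → β, Injective f ∧ f i = j ∧ ∀ k, f k ≠ c := by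
  have hcard : Fintype.card α ≤ Fintype.card {x // x ≠ c} := by
    rw [Fintype.card_subtype_compl, Fintype.card_subtype_eq]
    omega
  obtain ⟨e⟩ := Function.Embedding.nonempty_of_card_le hcard
  refine ⟨fun k => Equiv.swap (e i) ⟨j, hjc⟩ (e k), ?_, by simp,
    fun k => (Equiv.swap (e i) ⟨j, hjc⟩ (e k)).2⟩
  exact Subtype.val_injective.comp ((Equiv.injective _).comp e.injective)

theorem exists_injective_apply_eq_apply_eq [DecidableEq α] [DecidableEq β]
    (h : Fintype.card α < Fintype.card β) {i i' : α} (hi : i ≠ i') {j j' : β} (hj : j ≠ j') :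
    ∃ f : α → β, Injective f ∧ f i = j ∧ f i' = j' := by
  obtain ⟨f, hf, hfi, hfj'⟩ := exists_injective_apply_eq_forall_ne h i hj
  exact ⟨update f i' j', hf.update_of_forall_ne hfj' i', by simp [update_of_ne hi, hfi], by simp⟩

end Functions

section RookPlacements

variable {α β : Type*} [Fintype α] [DecidableEq α] [DecidableEq β]

def funGraph (f : α → β) : Finset (α × β) :=
  univ.image fun i => (i, f i)

variable (α β) in
def rookPlacements : Set (Finset (α × β)) :=
  {s | ∃ f : α → β, Injective f ∧ s = funGraph f}

@[simp]
theorem mem_funGraph {f : α → β} {p : α × β} : p ∈ funGraph f ↔ f p.1 = p.2 := by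
  constructor
  · intro h
    obtain ⟨i, -, rfl⟩ := mem_image.mp h
    rfl
  · intro h
    exact mem_image.mpr ⟨p.1, mem_univ _, by rw [h]⟩

theorem funGraph_mem_rookPlacements {f : α → β} (hf : Injective f) :
    funGraph f ∈ rookPlacements α β :=
  ⟨f, hf, rfl⟩

theorem symmDiff_funGraph_update {f : α → β} {i : α} {c : β} (hc : c ≠ f i) :
    symmDiff (funGraph f) (funGraph (update f i c)) = {(i, f i), (i, c)} := by
  ext ⟨k, d⟩
  rcases eq_or_ne k i with rfl | hk
  · simp only [mem_symmDiff, mem_funGraph, update_self, mem_insert, mem_singleton, Prod.mk.injEq,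
      true_and]
    constructor
    · rintro (⟨rfl, -⟩ | ⟨rfl, -⟩) <;> simp
    · rintro (rfl | rfl) <;> simp [hc, hc.symm]
  · simp [mem_symmDiff, hk]

theorem exchangeRel_funGraph_update {f : α → β} (hf : Injective f) {c : β} (hc : ∀ k, f k ≠ c)
    (i : α) : exchangeRel (rookPlacements α β) (funGraph f) (funGraph (update f i c)) := by
  refine ⟨funGraph_mem_rookPlacements (hf.update_of_forall_ne hc i), ?_⟩
  rw [symmDiff_funGraph_update (hc i).symm, card_pair (by simpa using hc i)]

section Connectivity

variable [Fintype β] (h : Fintype.card α < Fintype.card β)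
include h

theorem exists_reflTransGen_forall_ne {f g : α → β} (hf : Injective f) (hg : Injective g)
    {i : α} (hi : f i ≠ g i) :
    ∃ f', Injective f' ∧ Relation.ReflTransGen (exchangeRel (rookPlacements α β))
      (funGraph f) (funGraph f') ∧ f' i = f i ∧ (∀ k, f' k ≠ g i) ∧
      hammingDist f' g ≤ hammingDist f g := by
  obtain ⟨j, hj⟩ | hfree := em (∃ j, f j = g i)
  swap
  · exact ⟨f, hf, .refl, rfl, fun k hk => hfree ⟨k, hk⟩, le_rfl⟩
  have hji : j ≠ i := by rintro rfl; exact hi hj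
  obtain ⟨c, hc⟩ := exists_forall_apply_ne h f
  refine ⟨update f j c, hf.update_of_forall_ne hc j, .single (exchangeRel_funGraph_update hf hc j),
    update_of_ne hji.symm _ _, fun k => ?_, hammingDist_update_le ?_ c⟩
  · rcases eq_or_ne k j with rfl | hkj
    · simpa [← hj] using (hc k).symm
    · simpa [update_of_ne hkj, ← hj] using hf.ne hkj
  · rw [hj]
    exact hg.ne hji.symm

theorem reflTransGen_funGraph {f g : α → β} (hf : Injective f) (hg : Injective g) :
    Relation.ReflTransGen (exchangeRel (rookPlacements α β)) (funGraph f) (funGraph g) := by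
  induction hd : hammingDist f g using Nat.strong_induction_on generalizing f with
  | _ n ih =>
  obtain rfl | hfg := eq_or_ne f g
  · exact .refl
  obtain ⟨i, hi⟩ := ne_iff.mp hfg
  obtain ⟨f', hf', hreach, hf'i, hfree, hdist⟩ := exists_reflTransGen_forall_ne h hf hg hi
  have hlt := hammingDist_update_self_lt (g := g) (hf'i.trans_ne hi)
  exact hreach.trans (.head (exchangeRel_funGraph_update hf' hfree i)
    (ih _ (by omega) (hf'.update_of_forall_ne hfree i) rfl))

theorem stronglyConnectedHG_rookPlacements : StronglyConnectedHG (rookPlacements α β) :=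
  .of_reflTransGen <| by
    rintro _ ⟨f, hf, rfl⟩ _ ⟨g, hg, rfl⟩
    exact reflTransGen_funGraph h hf hg

end Connectivity

theorem exactTransversal_setOf_fst_eq (i : α) :
    ExactTransversal (rookPlacements α β) {p | p.1 = i} := by
  rintro _ ⟨f, -, rfl⟩
  refine ⟨(i, f i), ⟨by simp, rfl⟩, ?_⟩
  rintro ⟨k, d⟩ ⟨hkd, rfl : k = i⟩
  simp_all

namespace ExactTransversal

variable [Fintype β] (h : Fintype.card α < Fintype.card β) {S : Set (α × β)}
  (hS : ExactTransversal (rookPlacements α β) S)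
include h hS

theorem snd_eq_of_fst_ne {p q : α × β} (hp : p ∈ S) (hq : q ∈ S) (hpq : p.1 ≠ q.1) :
    p.2 = q.2 := by
  by_contra hpq'
  obtain ⟨f, hf, hfp, hfq⟩ := exists_injective_apply_eq_apply_eq h hpq hpq'
  obtain ⟨v, -, huniq⟩ := hS _ (funGraph_mem_rookPlacements hf)
  have : p = q := (huniq p ⟨mem_funGraph.2 hfp, hp⟩).trans (huniq q ⟨mem_funGraph.2 hfq, hq⟩).symm
  exact hpq (congrArg Prod.fst this)

theorem mk_fst_mem {p : α × β} (hp : p ∈ S) (j : β) : (p.1, j) ∈ S := by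
  obtain rfl | hj := eq_or_ne j p.2
  · exact hp
  obtain ⟨f, hf, hfj, hfp⟩ := exists_injective_apply_eq_forall_ne h p.1 hj
  obtain ⟨v, ⟨hvf, hvS⟩, -⟩ := hS _ (funGraph_mem_rookPlacements hf)
  rw [mem_funGraph] at hvf
  obtain hv | hv := eq_or_ne v.1 p.1
  · rwa [show (p.1, j) = v from Prod.ext hv.symm (by rw [← hvf, hv, hfj])]
  · exact (hfp v.1 (hvf.trans (hS.snd_eq_of_fst_ne h hvS hp hv))).elim

theorem fst_eq {p q : α × β} (hp : p ∈ S) (hq : q ∈ S) : q.1 = p.1 := by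
  by_contra hqp
  have hβ : 1 < Fintype.card β := lt_of_le_of_lt (Fintype.card_pos_iff.2 ⟨p.1⟩) h
  obtain ⟨j, hj⟩ := Fintype.exists_ne_of_one_lt_card hβ q.2
  exact hj (hS.snd_eq_of_fst_ne h (hS.mk_fst_mem h hp j) hq (Ne.symm hqp))

theorem nonempty : S.Nonempty := by
  obtain ⟨f⟩ := Function.Embedding.nonempty_of_card_le h.le
  obtain ⟨v, ⟨-, hv⟩, -⟩ := hS _ (funGraph_mem_rookPlacements f.injective)
  exact ⟨v, hv⟩

theorem eq_setOf_fst_eq : ∃ i, S = {p | p.1 = i} := by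
  obtain ⟨p, hp⟩ := hS.nonempty h
  exact ⟨p.1, Set.ext fun q => ⟨fun hq => hS.fst_eq h hp hq, fun hq => by
    simpa [← show q.1 = p.1 from hq] using hS.mk_fst_mem h hp q.2⟩⟩

end ExactTransversal

theorem exactTransversal_rookPlacements_iff [Fintype β] (h : Fintype.card α < Fintype.card β)
    {S : Set (α × β)} : ExactTransversal (rookPlacements α β) S ↔ ∃ i, S = {p | p.1 = i} := by
  refine ⟨fun hS => hS.eq_setOf_fst_eq h, ?_⟩
  rintro ⟨i, rfl⟩
  exact exactTransversal_setOf_fst_eq i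

end RookPlacements

theorem rookEdges_eq_rookPlacements (a b : ℕ) : rookEdges a b = rookPlacements (Fin a) (Fin b) :=
  rfl

/-- For a < b the rook hypergraph on the a×b board is strongly connected and its exact
transversals are exactly the rows. -/
theorem rook_hypergraph_stronglyConnected_rows (a b : ℕ) (hab : a < b) :
    StronglyConnectedHG (rookEdges a b) ∧
      ∀ S : Set (Fin a × Fin b),
        ExactTransversal (rookEdges a b) S ↔ ∃ i : Fin a, S = {p | p.1 = i} := by
  have hcard : Fintype.card (Fin a) < Fintype.card (Fin b) := by simpa using hab
  rw [rookEdges_eq_rookPlacements]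
  exact ⟨stronglyConnectedHG_rookPlacements hcard,
    fun _ => exactTransversal_rookPlacements_iff hcard⟩
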